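/- Let N ≥ 8 be an integer divisible by 4. The N/4 − 1 linear functionals β ↦ ψ_odd^{(i,j,k,l)}(β) on ℝ^{N/4}, indexed by (i,j,k,l) ∈ S_1, are linearly independent; equivalently, the common kernel {β ∈ ℝ^{N/4} : ψ_odd^{(i,j,k,l)}(β) = 0 for all (i,j,k,l) ∈ S_1} is a one-dimensional subspace of ℝ^{N/4}. -/

import Mathlib

/-- `c_α = cos(απ/N)` -/
noncomputable def cc (N : ℕ) (a : ℤ) : ℝ := Real.cos (a * Real.pi / N)

/-- `ψ_odd^{(i,j,k,l)}(β) = ∑_{s=1}^{N/4} β_s c_{(2s−1)i} c_{(2s−1)j} c_{(2s−1)k} c_{(2s−1)l}`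
as a linear functional on `ℝ^{N/4}`; the vector `β` is 0-indexed. -/
noncomputable def psiOddLin (N : ℕ) (i j k l : ℤ) : (Fin (N / 4) → ℝ) →ₗ[ℝ] ℝ :=
  ∑ s : Fin (N / 4),
    (cc N ((2 * (s : ℕ) + 1 : ℤ) * i) * cc N ((2 * (s : ℕ) + 1 : ℤ) * j) *
      cc N ((2 * (s : ℕ) + 1 : ℤ) * k) * cc N ((2 * (s : ℕ) + 1 : ℤ) * l)) •
        LinearMap.proj s

/-- `S₁ = {(0, n+1, N/2−n, N/2−1) : 1 ≤ n ≤ N/4−1}` -/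
def S1set (N : ℕ) : Set (ℤ × ℤ × ℤ × ℤ) :=
  {x | ∃ n : ℤ, 1 ≤ n ∧ n ≤ (N : ℤ) / 4 - 1 ∧
    x = (0, n + 1, (N : ℤ) / 2 - n, (N : ℤ) / 2 - 1)}

/-!
Write `M = N/4` and `xₛ = (2s+1)π/(2M)`. Since `(2s+1)(N/2 - a)π/N = (2s+1)π/2 - a xₛ/2`, the
coefficients of the functional indexed by `n ∈ S₁` are `(cos(n xₛ) + cos xₛ - cos((n+1)xₛ) - 1)/4`,
i.e. `ψ_n = (C_n + C_1 - C_{n+1} - C_0)/4` for the DCT-II coefficients `C_m β = ∑ₛ cos(m xₛ) βₛ`.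
By the discrete orthogonality of the cosines, `C_m` takes the value `M/2 · [m ≤ q]` on
`u_q = ½ + ∑_{k=1}^q cos(k xₛ)` whenever `0 ≤ m ≤ M`, so `ψ_n(u_q) = M/8 · δ_{nq}`. This
biorthogonality makes the `M - 1` functionals independent, and they cut out a line in `ℝ^M`.
-/

open Real Module

theorem linearIndependent_of_pairwise_dual_apply_eq_zero {R M ι : Type*} [CommRing R]
    [NoZeroDivisors R] [AddCommGroup M] [Module R M] {v : ι → M} (φ : ι → Dual R M)
    (hne : Pairwise fun i j => φ i (v j) = 0) (hself : ∀ i, φ i (v i) ≠ 0) :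
    LinearIndependent R v := by
  classical
  rw [linearIndependent_iff']
  intro s g hg i hi
  have hφ := congrArg (φ i) hg
  rw [map_sum, Finset.sum_eq_single i (fun j _ hji => by rw [map_smul, hne hji.symm, smul_zero])
    (absurd hi), map_smul, smul_eq_mul, map_zero] at hφ
  exact (mul_eq_zero.mp hφ).resolve_right (hself i)

theorem finrank_iInf_ker_eq {K V ι : Type*} [Field K] [AddCommGroup V] [Module K V]
    [FiniteDimensional K V] {f : ι → Dual K V} {s : Set ι} (hs : LinearIndepOn K f s) :
    finrank K ↥(⨅ i ∈ s, LinearMap.ker (f i)) = finrank K V - s.ncard := by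
  have : Finite s := hs.finite_of_isNoetherian
  have := Fintype.ofFinite s
  have hker : ⨅ i ∈ s, LinearMap.ker (f i) = (Submodule.span K (f '' s)).dualCoannihilator := by
    ext x
    rw [← SetLike.mem_coe (p := Submodule.dualCoannihilator _),
      Submodule.coe_dualCoannihilator_span]
    simp
  have hspan : finrank K (Submodule.span K (f '' s)) = s.ncard := by
    rw [Set.image_eq_range, finrank_span_eq_card hs, Set.ncard_eq_toFinset_card', Set.toFinset_card]
  have hdim := Subspace.finrank_add_finrank_dualCoannihilator_eq (Submodule.span K (f '' s))
  rw [hker]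
  omega

lemma cos_add_mul_sin_mul_sin (u v : ℝ) :
    cos (u + v) * sin u * sin v = (cos (2 * u) + cos (2 * v) - cos (2 * (u + v)) - 1) / 4 := by
  rw [cos_two_mul, cos_two_mul, cos_two_mul, cos_add]
  nlinarith [sin_sq_add_cos_sq u, sin_sq_add_cos_sq v]

lemma cos_odd_mul_pi_div_two_sub (s : ℕ) (y : ℝ) :
    cos ((2 * s + 1) * π / 2 - y) = (-1) ^ s * sin y := by
  rw [show (2 * s + 1) * π / 2 - y = (π / 2 - y) + s * π by ring, cos_add_nat_mul_pi,
    cos_pi_div_two_sub]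

noncomputable def dctNode (M s : ℕ) : ℝ := (2 * s + 1) * π / (2 * M)

lemma sum_range_cos_int_mul_dctNode {M : ℕ} {t : ℤ} (ht : ¬ (2 * M : ℤ) ∣ t) :
    ∑ s ∈ Finset.range M, cos (t * dctNode M s) = 0 := by
  obtain rfl | hM := eq_or_ne M 0
  · simp
  set θ : ℝ := t * π / (2 * M)
  have htel : ∀ s : ℕ, 2 * sin θ * cos (t * dctNode M s) =
      sin (2 * (s + 1 : ℕ) * θ) - sin (2 * s * θ) := by
    intro s
    have hθ : t * dctNode M s = (2 * s + 1) * θ := by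
      simp only [dctNode, θ]; ring
    rw [hθ, show 2 * ((s + 1 : ℕ) : ℝ) * θ = (2 * s + 1) * θ + θ by push_cast; ring,
      show 2 * (s : ℝ) * θ = (2 * s + 1) * θ - θ by ring, sin_add, sin_sub]
    ring
  have hsin : sin θ ≠ 0 := by
    rw [Ne, sin_eq_zero_iff]
    rintro ⟨k, hk⟩
    apply ht
    refine ⟨k, ?_⟩
    have : (t : ℝ) = 2 * M * k := by
      simp only [θ] at hk
      field_simp at hk
      linear_combination -hk
    exact_mod_cast this
  have hsum := Finset.sum_range_sub (fun s => sin (2 * s * θ)) M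
  rw [← Finset.sum_congr rfl fun s _ => htel s, ← Finset.mul_sum,
    show 2 * (M : ℝ) * θ = t * π by simp only [θ]; field_simp, sin_int_mul_pi] at hsum
  simpa [hsin] using hsum

lemma sum_cos_int_mul_dctNode {M : ℕ} {t : ℤ} (ht : |t| < 2 * M) :
    ∑ s : Fin M, cos (t * dctNode M s) = if t = 0 then (M : ℝ) else 0 := by
  rw [Fin.sum_univ_eq_sum_range (fun s => cos (t * dctNode M s))]
  split_ifs with ht0
  · simp [ht0]
  · refine sum_range_cos_int_mul_dctNode fun hdvd => ht0 ?_
    exact Int.eq_zero_of_abs_lt_dvd hdvd ht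

noncomputable def cosFunctional (M : ℕ) (m : ℤ) : Dual ℝ (Fin M → ℝ) :=
  ∑ s : Fin M, cos (m * dctNode M s) • LinearMap.proj s

noncomputable def cosVec (M : ℕ) (k : ℤ) : Fin M → ℝ := fun s => cos (k * dctNode M s)

lemma cosFunctional_apply (M : ℕ) (m : ℤ) (β : Fin M → ℝ) :
    cosFunctional M m β = ∑ s : Fin M, cos (m * dctNode M s) * β s := by
  simp [cosFunctional]

lemma cosFunctional_cosVec {M : ℕ} {j k : ℤ} (hadd : |j + k| < 2 * M) (hsub : |j - k| < 2 * M) :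
    cosFunctional M j (cosVec M k) =
      M / 2 * ((if j + k = 0 then 1 else 0) + if j = k then 1 else 0) := by
  have hprod : ∀ s : Fin M, cos (j * dctNode M s) * cosVec M k s =
      (cos (((j + k : ℤ) : ℝ) * dctNode M s) + cos (((j - k : ℤ) : ℝ) * dctNode M s)) / 2 := by
    intro s
    rw [cosVec]
    push_cast
    rw [add_mul, sub_mul, cos_add, cos_sub]
    ring
  rw [cosFunctional_apply, Finset.sum_congr rfl fun s _ => hprod s, ← Finset.sum_div,
    Finset.sum_add_distrib, sum_cos_int_mul_dctNode hadd, sum_cos_int_mul_dctNode hsub]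
  simp only [sub_eq_zero]
  split_ifs <;> ring

noncomputable def dctTestVec (M : ℕ) (q : ℤ) : Fin M → ℝ :=
  ∑ k ∈ Finset.Icc 0 q, cosVec M k - (1 / 2 : ℝ) • cosVec M 0

lemma cosFunctional_dctTestVec {M : ℕ} {m q : ℤ} (hm0 : 0 ≤ m) (hmM : m ≤ M) (hq0 : 0 ≤ q)
    (hqM : q < M) : cosFunctional M m (dctTestVec M q) = if m ≤ q then (M : ℝ) / 2 else 0 := by
  have hk : ∀ k ∈ Finset.Icc 0 q, cosFunctional M m (cosVec M k) =
      M / 2 * ((if k = -m then 1 else 0) + if m = k then 1 else 0) := by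
    intro k hk
    rw [Finset.mem_Icc] at hk
    rw [cosFunctional_cosVec (by rw [abs_lt]; omega) (by rw [abs_lt]; omega)]
    simp only [add_eq_zero_iff_eq_neg']
  rw [dctTestVec, map_sub, map_sum, map_smul, Finset.sum_congr rfl hk, ← Finset.mul_sum,
    Finset.sum_add_distrib, Finset.sum_ite_eq', Finset.sum_ite_eq,
    cosFunctional_cosVec (by rw [abs_lt]; omega) (by rw [abs_lt]; omega)]
  simp only [Finset.mem_Icc, smul_eq_mul]
  split_ifs <;> first | omega | ring

def s1Tuple (N : ℕ) (n : ℤ) : ℤ × ℤ × ℤ × ℤ := (0, n + 1, (N : ℤ) / 2 - n, (N : ℤ) / 2 - 1)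

lemma s1Tuple_injective (N : ℕ) : Function.Injective (s1Tuple N) := by
  intro n n' h
  simpa [s1Tuple] using congrArg (fun x => x.2.1) h

lemma S1set_eq_image (N : ℕ) : S1set N = s1Tuple N '' Set.Icc 1 ((N : ℤ) / 4 - 1) := by
  ext x
  simp only [S1set, s1Tuple, Set.mem_image, Set.mem_Icc, Set.mem_ofPred_eq]
  grind

lemma ncard_S1set (N : ℕ) : (S1set N).ncard = N / 4 - 1 := by
  rw [S1set_eq_image, Set.ncard_image_of_injective _ (s1Tuple_injective N), ← Finset.coe_Icc,
    Set.ncard_coe_finset, Int.card_Icc]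
  omega

lemma cc_odd_mul {N M : ℕ} (hN : N = 4 * M) (a : ℤ) (s : ℕ) :
    cc N ((2 * s + 1 : ℤ) * a) = cos (a * (dctNode M s / 2)) := by
  subst hN
  rw [cc, dctNode]
  congr 1
  push_cast
  ring

lemma cc_s1Tuple_coeff {N M : ℕ} (hN : N = 4 * M) (hM : M ≠ 0) (n : ℤ) (s : ℕ) :
    cc N ((2 * s + 1 : ℤ) * 0) * cc N ((2 * s + 1 : ℤ) * (n + 1)) *
        cc N ((2 * s + 1 : ℤ) * ((N : ℤ) / 2 - n)) * cc N ((2 * s + 1 : ℤ) * ((N : ℤ) / 2 - 1)) =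
      (cos (n * dctNode M s) + cos (((1 : ℤ) : ℝ) * dctNode M s)
        - cos (((n + 1 : ℤ) : ℝ) * dctNode M s) - cos (((0 : ℤ) : ℝ) * dctNode M s)) / 4 := by
  have hN2 : (N : ℤ) / 2 = 2 * M := by omega
  set θ := dctNode M s / 2 with hθ
  have hMθ : ((2 * M : ℤ) : ℝ) * θ = (2 * s + 1) * π / 2 := by
    rw [hθ, dctNode]
    push_cast
    field_simp
  have hsin : ∀ a : ℤ, cc N ((2 * s + 1 : ℤ) * ((N : ℤ) / 2 - a)) = (-1) ^ s * sin (a * θ) := by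
    intro a
    rw [cc_odd_mul hN, hN2, Int.cast_sub, sub_mul, hMθ, cos_odd_mul_pi_div_two_sub]
  have hx : dctNode M s = 2 * θ := by rw [hθ]; ring
  have hs : ((-1 : ℝ) ^ s) ^ 2 = 1 := by rw [← pow_mul, pow_mul', neg_one_sq, one_pow]
  rw [hsin, hsin, cc_odd_mul hN, cc_odd_mul hN, ← hθ, hx]
  push_cast
  simp only [zero_mul, cos_zero, one_mul]
  calc cos ((n + 1) * θ) * ((-1) ^ s * sin (n * θ)) * ((-1) ^ s * sin θ)
      = ((-1 : ℝ) ^ s) ^ 2 * (cos (n * θ + θ) * sin (n * θ) * sin θ) := by ring_nf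
    _ = _ := by
      rw [hs, one_mul, cos_add_mul_sin_mul_sin]
      ring_nf

lemma psiOddLin_s1Tuple {N : ℕ} (hN : 4 ∣ N) (hN0 : N ≠ 0) (n : ℤ) :
    psiOddLin N 0 (n + 1) ((N : ℤ) / 2 - n) ((N : ℤ) / 2 - 1) = (4 : ℝ)⁻¹ •
      (cosFunctional (N / 4) n + cosFunctional (N / 4) 1 - cosFunctional (N / 4) (n + 1)
        - cosFunctional (N / 4) 0) := by
  refine LinearMap.ext fun β => ?_
  have hcoeff (s : Fin (N / 4)) := cc_s1Tuple_coeff (Nat.mul_div_cancel' hN).symm (by omega) n s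
  simp only [psiOddLin, LinearMap.sum_apply, LinearMap.smul_apply,
    LinearMap.proj_apply, smul_eq_mul, hcoeff, LinearMap.add_apply, LinearMap.sub_apply,
    cosFunctional_apply, Finset.mul_sum, ← Finset.sum_add_distrib, ← Finset.sum_sub_distrib]
  refine Finset.sum_congr rfl fun s _ => ?_
  ring

lemma psiOddLin_s1Tuple_dctTestVec {N : ℕ} (hN : 4 ∣ N) {n q : ℤ}
    (hn : n ∈ Set.Icc 1 ((N : ℤ) / 4 - 1)) (hq : q ∈ Set.Icc 1 ((N : ℤ) / 4 - 1)) :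
    psiOddLin N 0 (n + 1) ((N : ℤ) / 2 - n) ((N : ℤ) / 2 - 1) (dctTestVec (N / 4) q) =
      if n = q then ((N / 4 : ℕ) : ℝ) / 8 else 0 := by
  rw [Set.mem_Icc] at hn hq
  have hM : ((N / 4 : ℕ) : ℤ) = (N : ℤ) / 4 := by omega
  rw [psiOddLin_s1Tuple hN (by omega), LinearMap.smul_apply, LinearMap.sub_apply,
    LinearMap.sub_apply, LinearMap.add_apply,
    cosFunctional_dctTestVec (m := n) (by omega) (by omega) (by omega) (by omega),
    cosFunctional_dctTestVec (m := 1) (by omega) (by omega) (by omega) (by omega),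
    cosFunctional_dctTestVec (m := n + 1) (by omega) (by omega) (by omega) (by omega),
    cosFunctional_dctTestVec (m := 0) (by omega) (by omega) (by omega) (by omega), smul_eq_mul]
  split_ifs <;> first | omega | ring

lemma linearIndepOn_psiOddLin_s1Tuple {N : ℕ} (hN : 4 ∣ N) :
    LinearIndepOn ℝ (fun n : ℤ => psiOddLin N 0 (n + 1) ((N : ℤ) / 2 - n) ((N : ℤ) / 2 - 1))
      (Set.Icc 1 ((N : ℤ) / 4 - 1)) := by
  refine linearIndependent_of_pairwise_dual_apply_eq_zero
    (fun q => Dual.eval ℝ _ (dctTestVec (N / 4) q.1)) (fun q n hqn => ?_) (fun n => ?_)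
  · dsimp only
    rw [Dual.eval_apply, psiOddLin_s1Tuple_dctTestVec hN n.2 q.2,
      if_neg fun h => hqn (Subtype.ext h.symm)]
  · have hn := n.2
    rw [Set.mem_Icc] at hn
    rw [Dual.eval_apply, psiOddLin_s1Tuple_dctTestVec hN n.2 n.2, if_pos rfl]
    have : N / 4 ≠ 0 := by omega
    positivity

theorem psiOdd_S1_linearIndependent (N : ℕ) (hN4 : 4 ∣ N) (hN8 : 8 ≤ N) :
    (S1set N).ncard = N / 4 - 1 ∧
    LinearIndependent ℝ (fun x : ↥(S1set N) =>
      psiOddLin N x.1.1 x.1.2.1 x.1.2.2.1 x.1.2.2.2) ∧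
    Module.finrank ℝ
      ↥(⨅ x ∈ S1set N, LinearMap.ker (psiOddLin N x.1 x.2.1 x.2.2.1 x.2.2.2)) = 1 := by
  have hindep : LinearIndepOn ℝ (fun x : ℤ × ℤ × ℤ × ℤ => psiOddLin N x.1 x.2.1 x.2.2.1 x.2.2.2)
      (S1set N) := by
    rw [S1set_eq_image]
    exact LinearIndepOn.image_of_comp _ _ (linearIndepOn_psiOddLin_s1Tuple hN4)
  refine ⟨ncard_S1set N, hindep, ?_⟩
  rw [finrank_iInf_ker_eq hindep, Module.finrank_fin_fun, ncard_S1set]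
  omega
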